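/- arXiv:1402.1093 — 3 statements merged into one kernel-verified Lean document; each statement's English description precedes it below -/
import Mathlib

section
/- Let {E_j} be real energies with probabilities p_j ≥ 0 summing to 1, and define η_ε = max over E ∈ ℝ of Σ_{j: E_j ∈ [E, E+ε]} p_j. Then for every T > 0 and every δ > 0, Σ_{j,k} p_j p_k e^{−2|E_j − E_k|T} ≤ 2η_{δ/(2T)} / (1 − e^{−δ}). In particular (δ = 2), Σ_{j,k} p_j p_k e^{−2|E_j − E_k|T} ≤ 2η_{1/T}/(1 − e^{−2}). -/
/-!
Fix `j` and sort the other energies into shells `iε ≤ |E_j - E_k| < (i+1)ε`. Each shell lies in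
two intervals of length `ε`, so carries mass at most `2η_ε`, and on it the weight
`e^{-2|E_j - E_k|T}` is at most `q^i` with `q = e^{-2εT}`. Summing the geometric series bounds the
inner sum by `2η_ε / (1 - q)`, and averaging over `j` keeps this bound. Take `ε = δ/(2T)`.
-/

open Finset Real

section

variable {ι : Type*} [Fintype ι] (E p : ι → ℝ)

noncomputable def windowMass (a ε : ℝ) : ℝ :=
  ∑ j ∈ univ.filter (fun j => a ≤ E j ∧ E j ≤ a + ε), p j

variable {E p}

lemma windowMass_le_iSup (hp : ∀ j, 0 ≤ p j) (a ε : ℝ) :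
    windowMass E p a ε ≤ ⨆ b, windowMass E p b ε := by
  refine le_ciSup (f := fun b => windowMass E p b ε) ⟨∑ j, p j, ?_⟩ a
  rintro _ ⟨b, rfl⟩
  exact sum_le_sum_of_subset_of_nonneg (filter_subset _ _) fun j _ _ => hp j

lemma exp_le_pow_floor_div {t ε T : ℝ} (ht : 0 ≤ t) (hε : 0 < ε) (hT : 0 ≤ T) :
    exp (-2 * t * T) ≤ exp (-(2 * ε * T)) ^ ⌊t / ε⌋₊ := by
  rw [← exp_nat_mul, exp_le_exp]
  have h := Nat.floor_le (div_nonneg ht hε.le)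
  rw [le_div_iff₀ hε] at h
  nlinarith

lemma sum_shell_le {ε M : ℝ} (hp : ∀ j, 0 ≤ p j) (hε : 0 < ε)
    (hM : ∀ a, windowMass E p a ε ≤ M) (x : ℝ) (i : ℕ) :
    ∑ k ∈ univ.filter (fun k => ⌊|x - E k| / ε⌋₊ = i), p k ≤ 2 * M := by
  set S := univ.filter (fun k => ⌊|x - E k| / ε⌋₊ = i)
  have hshell : ∀ k ∈ S, i * ε ≤ |x - E k| ∧ |x - E k| ≤ i * ε + ε := by
    intro k hk
    have h := (Nat.floor_eq_iff (by positivity)).1 (mem_filter.1 hk).2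
    rw [le_div_iff₀ hε, div_lt_iff₀ hε] at h
    constructor <;> linarith
  have hright : ∑ k ∈ S.filter (fun k => x ≤ E k), p k ≤ M := by
    refine (sum_le_sum_of_subset_of_nonneg ?_ fun k _ _ => hp k).trans (hM (x + i * ε))
    intro k hk
    obtain ⟨hkS, hxk⟩ := mem_filter.1 hk
    have h := hshell k hkS
    rw [abs_sub_comm, abs_of_nonneg (sub_nonneg.2 hxk)] at h
    exact mem_filter.2 ⟨mem_univ k, by constructor <;> linarith⟩
  have hleft : ∑ k ∈ S.filter (fun k => ¬x ≤ E k), p k ≤ M := by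
    refine (sum_le_sum_of_subset_of_nonneg ?_ fun k _ _ => hp k).trans (hM (x - (i * ε + ε)))
    intro k hk
    obtain ⟨hkS, hxk⟩ := mem_filter.1 hk
    have h := hshell k hkS
    rw [abs_of_nonneg (by linarith)] at h
    exact mem_filter.2 ⟨mem_univ k, by constructor <;> linarith⟩
  rw [← sum_filter_add_sum_filter_not S (fun k => x ≤ E k)]
  linarith

lemma sum_geom_le_inv_one_sub {q : ℝ} (hq0 : 0 ≤ q) (hq1 : q < 1) (s : Finset ℕ) :
    ∑ i ∈ s, q ^ i ≤ (1 - q)⁻¹ :=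
  tsum_geometric_of_lt_one hq0 hq1 ▸
    (summable_geometric_of_lt_one hq0 hq1).sum_le_tsum s fun i _ => pow_nonneg hq0 i

lemma sum_mul_exp_le {ε T M : ℝ} (hp : ∀ j, 0 ≤ p j) (hε : 0 < ε) (hT : 0 < T)
    (hM : ∀ a, windowMass E p a ε ≤ M) (x : ℝ) :
    ∑ k, p k * exp (-2 * |x - E k| * T) ≤ 2 * M / (1 - exp (-(2 * ε * T))) := by
  set q := exp (-(2 * ε * T))
  set m : ι → ℕ := fun k => ⌊|x - E k| / ε⌋₊
  have hq0 : 0 ≤ q := (exp_pos _).le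
  have hq1 : q < 1 := exp_lt_one_iff.2 (by nlinarith)
  have hM0 : 0 ≤ M := (sum_nonneg fun j _ => hp j).trans (hM 0)
  calc ∑ k, p k * exp (-2 * |x - E k| * T)
      ≤ ∑ k, p k * q ^ m k :=
        sum_le_sum fun k _ =>
          mul_le_mul_of_nonneg_left (exp_le_pow_floor_div (abs_nonneg _) hε hT.le) (hp k)
    _ = ∑ i ∈ univ.image m, ∑ k ∈ univ.filter (fun k => m k = i), p k * q ^ m k :=
        (sum_fiberwise_of_maps_to (fun k _ => mem_image_of_mem m (mem_univ k)) _).symm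
    _ = ∑ i ∈ univ.image m, q ^ i * ∑ k ∈ univ.filter (fun k => m k = i), p k := by
        refine sum_congr rfl fun i _ => ?_
        rw [mul_sum]
        refine sum_congr rfl fun k hk => ?_
        rw [(mem_filter.1 hk).2, mul_comm]
    _ ≤ ∑ i ∈ univ.image m, q ^ i * (2 * M) :=
        sum_le_sum fun i _ =>
          mul_le_mul_of_nonneg_left (sum_shell_le hp hε hM x i) (pow_nonneg hq0 i)
    _ ≤ (1 - q)⁻¹ * (2 * M) := by
        rw [← sum_mul]
        exact mul_le_mul_of_nonneg_right (sum_geom_le_inv_one_sub hq0 hq1 _) (by positivity)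
    _ = 2 * M / (1 - q) := by ring

lemma sum_sum_mul_exp_le {ε T M : ℝ} (hp : ∀ j, 0 ≤ p j) (hsum : ∑ j, p j = 1)
    (hε : 0 < ε) (hT : 0 < T) (hM : ∀ a, windowMass E p a ε ≤ M) :
    ∑ j, ∑ k, p j * p k * exp (-2 * |E j - E k| * T)
      ≤ 2 * M / (1 - exp (-(2 * ε * T))) :=
  calc ∑ j, ∑ k, p j * p k * exp (-2 * |E j - E k| * T)
      = ∑ j, p j * ∑ k, p k * exp (-2 * |E j - E k| * T) := by
        simp_rw [mul_sum, mul_assoc]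
    _ ≤ ∑ j, p j * (2 * M / (1 - exp (-(2 * ε * T)))) :=
        sum_le_sum fun j _ =>
          mul_le_mul_of_nonneg_left (sum_mul_exp_le hp hε hT hM (E j)) (hp j)
    _ = 2 * M / (1 - exp (-(2 * ε * T))) := by rw [← sum_mul, hsum, one_mul]

end

/-- For energies E_j with probabilities p_j and η_ε the maximum probability in any
energy interval of length ε: Σ_{j,k} p_j p_k e^{−2|E_j−E_k|T} ≤ 2η_{δ/(2T)}/(1−e^{−δ}),
and in particular (δ = 2) it is at most 2η_{1/T}/(1−e^{−2}). -/
theorem stmt_5 {n : ℕ} (E p : Fin n → ℝ) (hp : ∀ j, 0 ≤ p j) (hsum : ∑ j, p j = 1)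
    (η : ℝ → ℝ)
    (hη : ∀ ε, η ε = ⨆ E0 : ℝ,
        ∑ j ∈ Finset.univ.filter (fun j => E0 ≤ E j ∧ E j ≤ E0 + ε), p j)
    (T δ : ℝ) (hT : 0 < T) (hδ : 0 < δ) :
    (∑ j, ∑ k, p j * p k * Real.exp (-2 * |E j - E k| * T)
        ≤ 2 * η (δ / (2 * T)) / (1 - Real.exp (-δ))) ∧
    (∑ j, ∑ k, p j * p k * Real.exp (-2 * |E j - E k| * T)
        ≤ 2 * η (1 / T) / (1 - Real.exp (-2))) := by
  have key : ∀ ε > 0, ∑ j, ∑ k, p j * p k * exp (-2 * |E j - E k| * T)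
      ≤ 2 * η ε / (1 - exp (-(2 * ε * T))) := fun ε hε => by
    rw [hη]
    exact sum_sum_mul_exp_le hp hsum hε hT (windowMass_le_iSup hp · ε)
  constructor
  · convert key (δ / (2 * T)) (by positivity) using 5
    field_simp
  · convert key (1 / T) (by positivity) using 5
    field_simp
end

section
/- Let ρ and ω be density operators on a finite-dimensional Hilbert space with Tr(ω²) ≤ 1/d_eff, let P be a projector of rank K, and let ω_{L_T} be the Lorentzian time average of ρ_t = e^{−iHt}ρe^{iHt}. Then the Lorentzian-averaged distinguishability satisfies ⟨|Tr(P(ρ_t − ω))|⟩_T ≤ (5π/4)·√(K·Tr(ω_{L_T}²)) + √(K/d_eff), where ⟨·⟩_T is the uniform time average on [0,T]. -/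
/-!
Since `ρ_t` is positive semidefinite, `Tr(P ρ_t) ≥ 0`, so
`|Tr(P(ρ_t - ω))| ≤ Tr(P ρ_t) + |Tr(P ω)|`, and `|Tr(P ω)| ≤ √(K Tr(ω²)) ≤ √(K / d_eff)`
by Cauchy–Schwarz for the Frobenius inner product. The Lorentzian of width `T` centred at
`T / 2` is at least `4 / (5T)` on `[0, T]`, so the uniform average of the nonnegative function
`Tr(P ρ_t)` is at most `5/4` times its Lorentzian integral, which by linearity of the trace
equals `π Tr(P ω_{L_T}) ≤ π √(K Tr(ω_{L_T}²))`, again by Cauchy–Schwarz.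
-/

open scoped ComplexOrder Matrix
open MeasureTheory Complex

namespace Matrix

variable {n : Type*}

theorem IsHermitian.of_apply_eq_ite {ρ ω : Matrix n n ℂ} (hρ : ρ.IsHermitian) (E : n → ℝ)
    (hω : ∀ j k, ω j k = if E j = E k then ρ j k else 0) : ω.IsHermitian := by
  ext j k
  simp only [conjTranspose_apply, hω, eq_comm (a := E k)]
  split_ifs
  · exact hρ.apply j k
  · exact star_zero _

variable [Fintype n]

theorem trace_eq_rank_of_isIdempotentElem {K : Type*} [Field K] [CharZero K] [DecidableEq n]
    {P : Matrix n n K} (hP : IsIdempotentElem P) : P.trace = P.rank := by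
  have h : IsIdempotentElem (toLin' P) := hP.map toLinAlgEquiv'
  rw [← trace_toLin'_eq, (LinearMap.IsIdempotentElem.isProj_range _ h).trace]
  rfl

theorem re_trace_mul_conjTranspose_self {m : Type*} [Fintype m] (A : Matrix m n ℂ) :
    (A * Aᴴ).trace.re = ∑ i, ∑ j, ‖A i j‖ ^ 2 := by
  simp [trace, mul_apply, Complex.mul_conj']
  norm_cast

theorem norm_trace_mul_le (A B : Matrix n n ℂ) :
    ‖(A * B).trace‖ ≤ √(A * Aᴴ).trace.re * √(B * Bᴴ).trace.re := by
  rw [re_trace_mul_conjTranspose_self, re_trace_mul_conjTranspose_self B,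
    ← Fintype.sum_prod_type', ← Fintype.sum_prod_type',
    ← (Equiv.prodComm n n).sum_comp (fun p => ‖B p.1 p.2‖ ^ 2)]
  calc ‖(A * B).trace‖ = ‖∑ p : n × n, A p.1 p.2 * B p.2 p.1‖ := by
        simp [trace, mul_apply, Fintype.sum_prod_type]
    _ ≤ ∑ p : n × n, ‖A p.1 p.2‖ * ‖B p.2 p.1‖ := (norm_sum_le _ _).trans_eq (by simp)
    _ ≤ _ := Real.sum_mul_le_sqrt_mul_sqrt _ _ _

theorem re_trace_mul_conjTranspose_self_of_isStarProjection [DecidableEq n]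
    {P : Matrix n n ℂ} (hP : IsStarProjection P) : (P * Pᴴ).trace.re = P.rank := by
  have hPh : Pᴴ = P := hP.isSelfAdjoint
  rw [hPh, hP.isIdempotentElem.eq, trace_eq_rank_of_isIdempotentElem hP.isIdempotentElem]
  simp

theorem norm_trace_mul_le_of_isStarProjection [DecidableEq n]
    {P : Matrix n n ℂ} (hP : IsStarProjection P) (A : Matrix n n ℂ) :
    ‖(P * A).trace‖ ≤ √(P.rank * (A * Aᴴ).trace.re) := by
  rw [Real.sqrt_mul (Nat.cast_nonneg _), ← re_trace_mul_conjTranspose_self_of_isStarProjection hP]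
  exact norm_trace_mul_le P A

theorem trace_mul_nonneg_of_isStarProjection {P A : Matrix n n ℂ} (hP : IsStarProjection P)
    (hA : A.PosSemidef) : 0 ≤ (P * A).trace := by
  have h := (hA.mul_mul_conjTranspose_same P).trace_nonneg
  have hPh : Pᴴ = P := hP.isSelfAdjoint
  rwa [hPh, trace_mul_cycle, hP.isIdempotentElem.eq] at h

theorem PosSemidef.of_apply_eq_mul_exp {ρ σ : Matrix n n ℂ} (hρ : ρ.PosSemidef)
    (φ : n → ℝ)
    (hσ : ∀ j k, σ j k = ρ j k * exp (-I * ((φ j : ℂ) - φ k))) : σ.PosSemidef := by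
  classical
  have h : σ = diagonal (fun j => exp (-I * φ j)) * ρ *
      (diagonal fun j => exp (-I * φ j))ᴴ := by
    ext j k
    rw [diagonal_conjTranspose, mul_diagonal, diagonal_mul, hσ, Pi.star_apply, RCLike.star_def,
      ← Complex.exp_conj, mul_comm (exp _) (ρ j k), mul_assoc, ← Complex.exp_add]
    simp only [map_mul, map_neg, conj_I, conj_ofReal]
    ring_nf
  rw [h]
  exact hρ.mul_mul_conjTranspose_same _

variable {𝕜 α : Type*} [RCLike 𝕜] [MeasurableSpace α] {μ : Measure α}

theorem integrable_trace_mul (P : Matrix n n 𝕜) {M : α → Matrix n n 𝕜}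
    (hM : ∀ j k, Integrable (fun t => M t j k) μ) :
    Integrable (fun t => (P * M t).trace) μ := by
  have h : ∀ Q : Matrix n n 𝕜, (P * Q).trace = ∑ i, ∑ j, P i j * Q j i := fun Q => by
    simp [trace, mul_apply]
  simp only [h]
  exact integrable_finsetSum _ fun i _ => integrable_finsetSum _ fun j _ => (hM j i).const_mul _

theorem integral_trace_mul (P : Matrix n n 𝕜) {M : α → Matrix n n 𝕜}
    (hM : ∀ j k, Integrable (fun t => M t j k) μ) :
    ∫ t, (P * M t).trace ∂μ = (P * of fun j k => ∫ t, M t j k ∂μ).trace := by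
  have h : ∀ Q : Matrix n n 𝕜, (P * Q).trace = ∑ i, ∑ j, P i j * Q j i := fun Q => by
    simp [trace, mul_apply]
  simp only [h, of_apply]
  rw [integral_finsetSum Finset.univ fun i _ =>
    integrable_finsetSum Finset.univ fun j _ => (hM j i).const_mul (P i j)]
  refine Finset.sum_congr rfl fun i _ => ?_
  rw [integral_finsetSum Finset.univ fun j _ => (hM j i).const_mul (P i j)]
  exact Finset.sum_congr rfl fun j _ => integral_const_mul _ _

theorem ofReal_norm_trace_mul_mul {P A : Matrix n n ℂ} (hP : IsStarProjection P)
    (hA : A.PosSemidef) (r : ℝ) :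
    ((‖(P * A).trace‖ * r : ℝ) : ℂ) = (P * of fun j k => A j k * r).trace := by
  have h : (of fun j k => A j k * r) = (r : ℂ) • A := by
    ext j k
    simp [mul_comm]
  rw [h, Matrix.mul_smul, trace_smul, smul_eq_mul, ofReal_mul,
    norm_of_nonneg' (trace_mul_nonneg_of_isStarProjection hP hA), mul_comm]

theorem integrable_norm_trace_mul_mul {P : Matrix n n ℂ} (hP : IsStarProjection P)
    {ρ : α → Matrix n n ℂ} (hρ : ∀ t, (ρ t).PosSemidef) {w : α → ℝ}
    (hint : ∀ j k, Integrable (fun t => ρ t j k * w t) μ) :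
    Integrable (fun t => ‖(P * ρ t).trace‖ * w t) μ :=
  (integrable_trace_mul P (M := fun t => of fun j k => ρ t j k * w t) hint).re.congr
    (Filter.Eventually.of_forall fun t =>
      (congrArg re (ofReal_norm_trace_mul_mul hP (hρ t) (w t)).symm).trans (ofReal_re _))

theorem integral_norm_trace_mul_mul {P : Matrix n n ℂ} (hP : IsStarProjection P)
    {ρ : α → Matrix n n ℂ} (hρ : ∀ t, (ρ t).PosSemidef) {w : α → ℝ} (hw : 0 ≤ w)
    (hint : ∀ j k, Integrable (fun t => ρ t j k * w t) μ) :
    ∫ t, ‖(P * ρ t).trace‖ * w t ∂μ =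
      ‖(P * of fun j k => ∫ t, ρ t j k * w t ∂μ).trace‖ := by
  have h : ((∫ t, ‖(P * ρ t).trace‖ * w t ∂μ : ℝ) : ℂ) =
      ∫ t, (P * of fun j k => ρ t j k * w t).trace ∂μ :=
    integral_ofReal.symm.trans
      (integral_congr_ae (Filter.Eventually.of_forall fun t =>
        ofReal_norm_trace_mul_mul hP (hρ t) (w t)))
  calc ∫ t, ‖(P * ρ t).trace‖ * w t ∂μ
      = ‖((∫ t, ‖(P * ρ t).trace‖ * w t ∂μ : ℝ) : ℂ)‖ :=
        ((norm_real _).trans (Real.norm_of_nonneg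
          (integral_nonneg fun t => mul_nonneg (norm_nonneg _) (hw t)))).symm
    _ = _ := congrArg norm (h.trans (integral_trace_mul P hint))

end Matrix

open Matrix

/-- `π⁻¹ * lorentzianKernel T` is the Cauchy density of scale `T` centred at `T / 2`. -/
noncomputable def lorentzianKernel (T t : ℝ) : ℝ := T / (T ^ 2 + (t - T / 2) ^ 2)

section Lorentzian

variable {T : ℝ}

theorem lorentzianKernel_nonneg (hT : 0 ≤ T) (t : ℝ) : 0 ≤ lorentzianKernel T t := by
  unfold lorentzianKernel
  positivity

theorem integrable_lorentzianKernel (hT : 0 < T) : Integrable (lorentzianKernel T) := by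
  have h : Integrable fun t : ℝ => T⁻¹ * (1 + ((t - T / 2) / T) ^ 2)⁻¹ :=
    ((integrable_inv_one_add_sq.comp_div hT.ne').comp_sub_right (T / 2)).const_mul _
  refine h.congr (Filter.Eventually.of_forall fun t => ?_)
  simp only [lorentzianKernel]
  field_simp

theorem div_le_lorentzianKernel (hT : 0 < T) {t : ℝ} (ht : t ∈ Set.Icc 0 T) :
    4 / (5 * T) ≤ lorentzianKernel T t := by
  unfold lorentzianKernel
  rw [div_le_div_iff₀ (by positivity) (by positivity)]
  nlinarith [ht.1, ht.2]

theorem integrable_mul_lorentzianKernel (hT : 0 < T) {g : ℝ → ℂ} (hg : Continuous g) {C : ℝ}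
    (hgC : ∀ t, ‖g t‖ ≤ C) : Integrable fun t => g t * lorentzianKernel T t :=
  (integrable_lorentzianKernel hT).ofReal.bdd_mul hg.aestronglyMeasurable
    (Filter.Eventually.of_forall hgC)

theorem average_le_integral_mul_lorentzianKernel (hT : 0 < T) {f : ℝ → ℝ} (hf : 0 ≤ f)
    (hfL : Integrable fun t => f t * lorentzianKernel T t) :
    1 / T * ∫ t in 0..T, f t ≤ 5 / 4 * ∫ t, f t * lorentzianKernel T t := by
  have hpt : ∀ t ∈ Set.Ioc 0 T, f t ≤ 5 * T / 4 * (f t * lorentzianKernel T t) :=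
      fun t ht => by
    have h := div_le_lorentzianKernel hT (Set.Ioc_subset_Icc_self ht)
    rw [div_le_iff₀ (by positivity)] at h
    nlinarith [mul_le_mul_of_nonneg_left h (hf t)]
  rw [intervalIntegral.integral_of_le hT.le]
  calc 1 / T * ∫ t in Set.Ioc 0 T, f t
      ≤ 1 / T * ∫ t in Set.Ioc 0 T, 5 * T / 4 * (f t * lorentzianKernel T t) := by
        refine mul_le_mul_of_nonneg_left ?_ (by positivity)
        exact integral_mono_of_nonneg (Filter.Eventually.of_forall hf)
          (hfL.integrableOn.const_mul _)
          ((ae_restrict_iff' measurableSet_Ioc).2 (Filter.Eventually.of_forall hpt))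
    _ = 5 / 4 * ∫ t in Set.Ioc 0 T, f t * lorentzianKernel T t := by
        rw [integral_const_mul]
        field_simp
    _ ≤ 5 / 4 * ∫ t, f t * lorentzianKernel T t := by
        refine mul_le_mul_of_nonneg_left ?_ (by positivity)
        exact setIntegral_le_integral hfL
          (Filter.Eventually.of_forall fun t => mul_nonneg (hf t) (lorentzianKernel_nonneg hT.le t))

theorem intervalAverage_norm_sub_le (hT : 0 < T) {a : ℝ → ℂ} (ha : Continuous a) {b : ℂ}
    {c : ℝ} (hb : ‖b‖ ≤ c) :
    1 / T * ∫ t in 0..T, ‖a t - b‖ ≤ 1 / T * (∫ t in 0..T, ‖a t‖) + c :=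
  calc 1 / T * ∫ t in 0..T, ‖a t - b‖
      ≤ 1 / T * ∫ t in 0..T, (‖a t‖ + c) :=
        mul_le_mul_of_nonneg_left (intervalIntegral.integral_mono_on hT.le
          (Continuous.intervalIntegrable (by fun_prop) _ _)
          (Continuous.intervalIntegrable (by fun_prop) _ _)
          fun t _ => (norm_sub_le _ _).trans (add_le_add le_rfl hb)) (by positivity)
    _ = 1 / T * (∫ t in 0..T, ‖a t‖) + c := by
        rw [intervalIntegral.integral_add (ha.norm.intervalIntegrable _ _)
          intervalIntegrable_const, intervalIntegral.integral_const, sub_zero, smul_eq_mul]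
        field_simp

/-- The paper's `ω_{L_T}` for the trajectory `ρ`. -/
noncomputable def lorentzianAverage {n : Type*} (T : ℝ) (ρ : ℝ → Matrix n n ℂ) :
    Matrix n n ℂ :=
  of fun j k => (1 / (Real.pi : ℂ)) * ∫ t, ρ t j k * lorentzianKernel T t

theorem average_norm_trace_mul_le_lorentzianAverage {n : Type*} [Fintype n]
    {P : Matrix n n ℂ} (hP : IsStarProjection P) {ρ : ℝ → Matrix n n ℂ}
    (hρ : ∀ t, (ρ t).PosSemidef) (hT : 0 < T)
    (hint : ∀ j k, Integrable fun t => ρ t j k * lorentzianKernel T t) :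
    1 / T * ∫ t in 0..T, ‖(P * ρ t).trace‖
      ≤ 5 * Real.pi / 4 * ‖(P * lorentzianAverage T ρ).trace‖ := by
  have hπ : (of fun j k => ∫ t, ρ t j k * lorentzianKernel T t)
      = (Real.pi : ℂ) • lorentzianAverage T ρ := by
    ext j k
    simp [lorentzianAverage, Real.pi_ne_zero]
  calc 1 / T * ∫ t in 0..T, ‖(P * ρ t).trace‖
      ≤ 5 / 4 * ∫ t, ‖(P * ρ t).trace‖ * lorentzianKernel T t :=
        average_le_integral_mul_lorentzianKernel hT (fun t => norm_nonneg _)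
          (integrable_norm_trace_mul_mul hP hρ hint)
    _ = 5 * Real.pi / 4 * ‖(P * lorentzianAverage T ρ).trace‖ := by
        rw [integral_norm_trace_mul_mul hP hρ (lorentzianKernel_nonneg hT.le) hint, hπ,
          Matrix.mul_smul, trace_smul, norm_smul, norm_real, Real.norm_of_nonneg Real.pi_pos.le]
        ring

end Lorentzian

theorem stmt_6_general {d : ℕ} (ρ ω P : Matrix (Fin d) (Fin d) ℂ) (E : Fin d → ℝ)
    (hρ : ρ.PosSemidef)
    (ρt : ℝ → Matrix (Fin d) (Fin d) ℂ)
    (hρt : ∀ t j k, ρt t j k =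
        ρ j k * Complex.exp (-Complex.I * ((E j : ℂ) - (E k : ℂ)) * t))
    (hω : ∀ j k, ω j k = if E j = E k then ρ j k else 0)
    (hP : P * P = P) (hPh : Pᴴ = P) (K : ℕ) (hK : P.rank = K)
    (deff : ℝ) (hωp : ((ω * ω).trace).re ≤ 1 / deff)
    (T : ℝ) (hT : 0 < T)
    (ωLT : Matrix (Fin d) (Fin d) ℂ)
    (hωLT : ∀ j k, ωLT j k = (1 / (Real.pi : ℂ)) *
        ∫ t : ℝ, ρt t j k * ((T / (T ^ 2 + (t - T / 2) ^ 2) : ℝ) : ℂ)) :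
    (1 / T) * ∫ t in (0 : ℝ)..T, ‖(P * (ρt t - ω)).trace‖
      ≤ (5 * Real.pi / 4) * Real.sqrt (K * ((ωLT * ωLTᴴ).trace).re)
        + Real.sqrt (K / deff) := by
  have hProj : IsStarProjection P := ⟨hP, hPh⟩
  have hρt_psd : ∀ t, (ρt t).PosSemidef := fun t =>
    hρ.of_apply_eq_mul_exp (fun j => E j * t) fun j k => by rw [hρt]; push_cast; ring_nf
  have hρt_cont : Continuous ρt :=
    continuous_pi fun j => continuous_pi fun k => by simp_rw [hρt]; fun_prop
  have hρt_int : ∀ j k, Integrable fun t => ρt t j k * lorentzianKernel T t := fun j k =>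
    integrable_mul_lorentzianKernel hT (by fun_prop) (C := ‖ρ j k‖) fun t => by
      rw [hρt, norm_mul, norm_exp]
      simp
  have hω_bound : ‖(P * ω).trace‖ ≤ √(K / deff) :=
    calc ‖(P * ω).trace‖ ≤ √(K * (ω * ωᴴ).trace.re) :=
          hK ▸ norm_trace_mul_le_of_isStarProjection hProj ω
      _ ≤ √(K * (1 / deff)) := by
          rw [(hρ.isHermitian.of_apply_eq_ite E hω).eq]
          gcongr
      _ = √(K / deff) := by rw [mul_one_div]
  obtain rfl : ωLT = lorentzianAverage T ρt := ext hωLT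
  simp only [Matrix.mul_sub, trace_sub]
  calc _ ≤ 1 / T * (∫ t in (0 : ℝ)..T, ‖(P * ρt t).trace‖) + √(K / deff) :=
        intervalAverage_norm_sub_le hT (by fun_prop) hω_bound
    _ ≤ _ := by
        refine add_le_add ((average_norm_trace_mul_le_lorentzianAverage hProj hρt_psd hT
          hρt_int).trans ?_) le_rfl
        gcongr
        exact hK ▸ norm_trace_mul_le_of_isStarProjection hProj _

/-- Lorentzian bound on the time-averaged distinguishability:
⟨|Tr(P(ρ_t − ω))|⟩_T ≤ (5π/4)·√(K·Tr(ω_{L_T}²)) + √(K/d_eff), where ω is the dephased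
state with Tr(ω²) ≤ 1/d_eff, P is a rank-K projector and ω_{L_T} the Lorentzian average. -/
theorem stmt_6 {d : ℕ} (ρ ω P : Matrix (Fin d) (Fin d) ℂ) (E : Fin d → ℝ)
    (hρ : ρ.PosSemidef) (htr : ρ.trace = 1)
    (ρt : ℝ → Matrix (Fin d) (Fin d) ℂ)
    (hρt : ∀ t j k, ρt t j k =
        ρ j k * Complex.exp (-Complex.I * ((E j : ℂ) - (E k : ℂ)) * t))
    (hω : ∀ j k, ω j k = if E j = E k then ρ j k else 0)
    (hP : P * P = P) (hPh : Pᴴ = P) (K : ℕ) (hK : P.rank = K)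
    (deff : ℝ) (hdeff : 0 < deff) (hωp : ((ω * ω).trace).re ≤ 1 / deff)
    (T : ℝ) (hT : 0 < T)
    (ωLT : Matrix (Fin d) (Fin d) ℂ)
    (hωLT : ∀ j k, ωLT j k = (1 / (Real.pi : ℂ)) *
        ∫ t : ℝ, ρt t j k * ((T / (T ^ 2 + (t - T / 2) ^ 2) : ℝ) : ℂ)) :
    (1 / T) * ∫ t in (0 : ℝ)..T, ‖(P * (ρt t - ω)).trace‖
      ≤ (5 * Real.pi / 4) * Real.sqrt (K * ((ωLT * ωLTᴴ).trace).re)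
        + Real.sqrt (K / deff) :=
  stmt_6_general ρ ω P E hρ ρt hρt hω hP hPh K hK deff hωp T hT ωLT hωLT
end

section
/- For a pure state with Gaussian energy distribution of standard deviation σ_E (continuous approximation), Tr(ω_{L_T}²) = (T/π)∫_{−∞}^{∞} e^{−4σ_E²t²}/(T² + t²) dt = e^{4σ_E²T²}(1 − erf(2σ_E T)). -/
/-!
Both expressions equal `e^{4σ²T²} · (2/√π) ∫_{2σT}^∞ e^{-v²} dv`. For the double integral, pass to
the difference variable `u = E' - E`: integrating out `E` leaves a Gaussian of variance `2σ²` in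
`u`, and completing the square in `∫ e^{-u²/4σ² - 2|u|T} du` produces the Gaussian tail. For the
Lorentzian form, write `1/(T² + t²) = ∫₀^∞ e^{-(T² + t²)s} ds`, integrate the Gaussian in `t`
first, and substitute `s = w² - 4σ²`.
-/

open MeasureTheory Set Real

lemma two_div_sqrt_pi_mul_integral_Ioi_exp_neg_sq (a : ℝ) :
    2 / √π * ∫ v in Ioi a, exp (-v ^ 2) = 1 - 2 / √π * ∫ t in (0 : ℝ)..a, exp (-t ^ 2) := by
  have hint : Integrable (fun v : ℝ => exp (-v ^ 2)) := by
    simpa using integrable_exp_neg_mul_sq one_pos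
  have h0 : ∫ v in Ioi (0 : ℝ), exp (-v ^ 2) = √π / 2 := by
    simpa using integral_gaussian_Ioi 1
  rw [← intervalIntegral.integral_Ioi_sub_Ioi' hint.integrableOn hint.integrableOn, h0]
  field_simp
  ring

lemma integral_Ioi_comp_mul_add (g : ℝ → ℝ) {b : ℝ} (hb : 0 < b) (c A : ℝ) :
    ∫ u in Ioi A, g (b * u + c) = b⁻¹ * ∫ v in Ioi (b * A + c), g v := by
  have himg : (fun u : ℝ => b * u + c) '' Ioi A = Ioi (b * A + c) := by
    ext y
    simp only [mem_image, mem_Ioi]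
    constructor
    · rintro ⟨x, hx, rfl⟩; nlinarith
    · intro hy
      exact ⟨(y - c) / b, by rw [lt_div_iff₀ hb]; nlinarith, by field_simp; ring⟩
  have hder : ∀ x ∈ Ioi A, HasDerivWithinAt (fun u : ℝ => b * u + c) b (Ioi A) x := fun x _ => by
    simpa using (((hasDerivAt_id x).const_mul b).add_const c).hasDerivWithinAt
  have hinj : InjOn (fun u : ℝ => b * u + c) (Ioi A) := fun x _ y _ h =>
    mul_left_cancel₀ hb.ne' (by simpa using h)
  rw [← himg, integral_image_eq_integral_abs_deriv_smul measurableSet_Ioi hder hinj, abs_of_pos hb]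
  simp only [smul_eq_mul]
  rw [integral_const_mul, inv_mul_cancel_left₀ hb.ne']

lemma integral_Ioi_zero_eq_integral_Ioi_sq_sub (g : ℝ → ℝ) {A : ℝ} (hA : 0 ≤ A) :
    ∫ s in Ioi 0, g s = ∫ w in Ioi A, 2 * w * g (w ^ 2 - A ^ 2) := by
  have himg : (fun w : ℝ => w ^ 2 - A ^ 2) '' Ioi A = Ioi 0 := by
    ext y
    simp only [mem_image, mem_Ioi]
    constructor
    · rintro ⟨x, hx, rfl⟩; nlinarith
    · intro hy
      refine ⟨√(y + A ^ 2), (lt_sqrt hA).mpr (by linarith), ?_⟩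
      rw [sq_sqrt (by positivity)]; ring
  have hder : ∀ x ∈ Ioi A, HasDerivWithinAt (fun w : ℝ => w ^ 2 - A ^ 2) (2 * x) (Ioi A) x :=
    fun x _ => by simpa using ((hasDerivAt_pow 2 x).sub_const (A ^ 2)).hasDerivWithinAt
  have hinj : InjOn (fun w : ℝ => w ^ 2 - A ^ 2) (Ioi A) := fun x hx y hy h => by
    simp only [mem_Ioi, sub_left_inj] at hx hy h
    nlinarith
  rw [← himg, integral_image_eq_integral_abs_deriv_smul measurableSet_Ioi hder hinj]
  refine setIntegral_congr_fun measurableSet_Ioi fun w (hw : A < w) => ?_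
  rw [smul_eq_mul, abs_of_pos (by linarith)]

lemma integral_integral_mul_mul_comp_sub {f g K : ℝ → ℝ} {C : ℝ} (hf : Integrable f)
    (hg : Integrable g) (hK : Continuous K) (hKC : ∀ x, |K x| ≤ C) :
    ∫ x, ∫ y, f x * g y * K (y - x) = ∫ u, K u * ∫ x, f x * g (u + x) := by
  set F : ℝ × ℝ → ℝ := fun z => f z.1 * g z.2 * K (z.2 - z.1) with hF_def
  have hF : Integrable F (volume.prod volume) := by
    refine ((hf.mul_prod hg).norm.const_mul C).mono' ?_ (Filter.Eventually.of_forall fun z => ?_)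
    · exact (hf.mul_prod hg).aestronglyMeasurable.mul
        (hK.comp (continuous_snd.sub continuous_fst)).aestronglyMeasurable
    · rw [hF_def, norm_mul, mul_comm, Real.norm_eq_abs (K _)]
      exact mul_le_mul_of_nonneg_right (hKC _) (norm_nonneg _)
  have hshear : Integrable (fun z : ℝ × ℝ => F (z.1, z.2 + z.1)) (volume.prod volume) :=
    (measurePreserving_prod_add_right volume volume).integrable_comp_of_integrable hF
  calc ∫ x, ∫ y, f x * g y * K (y - x) = ∫ x, ∫ u, f x * g (u + x) * K u := by
        congr 1 with x
        rw [← integral_add_right_eq_self _ x]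
        simp_rw [add_sub_cancel_right]
    _ = ∫ u, ∫ x, f x * g (u + x) * K u := by
        refine integral_integral_swap (hshear.congr (Filter.Eventually.of_forall fun z => ?_))
        simp [hF_def, Function.uncurry]
    _ = ∫ u, K u * ∫ x, f x * g (u + x) := by
        simp_rw [integral_mul_const, mul_comm]

lemma integral_exp_neg_sq_mul_exp_neg_add_sq {σ : ℝ} (hσ : 0 < σ) (u : ℝ) :
    ∫ x, exp (-x ^ 2 / (2 * σ ^ 2)) * exp (-(u + x) ^ 2 / (2 * σ ^ 2)) =
      σ * √π * exp (-u ^ 2 / (4 * σ ^ 2)) := by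
  have hsq : ∀ x, exp (-x ^ 2 / (2 * σ ^ 2)) * exp (-(u + x) ^ 2 / (2 * σ ^ 2)) =
      exp (-u ^ 2 / (4 * σ ^ 2)) * exp (-(σ ^ 2)⁻¹ * (x + u / 2) ^ 2) := fun x => by
    rw [← exp_add, ← exp_add]; congr 1; field_simp; ring
  simp_rw [hsq]
  rw [integral_const_mul, integral_add_right_eq_self (fun x => exp (-(σ ^ 2)⁻¹ * x ^ 2)),
    integral_gaussian, div_inv_eq_mul, sqrt_mul pi_pos.le, sqrt_sq hσ.le]
  ring

lemma integral_exp_neg_abs_mul_exp_neg_sq {σ T : ℝ} (hσ : 0 < σ) :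
    ∫ u, exp (-2 * |u| * T) * exp (-u ^ 2 / (4 * σ ^ 2)) =
      4 * σ * exp (4 * σ ^ 2 * T ^ 2) * ∫ v in Ioi (2 * σ * T), exp (-v ^ 2) := by
  have hsq : ∀ x, exp (-2 * x * T) * exp (-x ^ 2 / (4 * σ ^ 2)) =
      exp (4 * σ ^ 2 * T ^ 2) * exp (-((2 * σ)⁻¹ * x + 2 * σ * T) ^ 2) := fun x => by
    rw [← exp_add, ← exp_add]; congr 1; field_simp; ring
  calc ∫ u, exp (-2 * |u| * T) * exp (-u ^ 2 / (4 * σ ^ 2))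
      = 2 * ∫ x in Ioi 0, exp (-2 * x * T) * exp (-x ^ 2 / (4 * σ ^ 2)) := by
        rw [← integral_comp_abs (f := fun x => exp (-2 * x * T) * exp (-x ^ 2 / (4 * σ ^ 2)))]
        simp only [sq_abs]
    _ = 4 * σ * exp (4 * σ ^ 2 * T ^ 2) * ∫ v in Ioi (2 * σ * T), exp (-v ^ 2) := by
        simp_rw [hsq]
        rw [integral_const_mul, integral_Ioi_comp_mul_add (fun v => exp (-v ^ 2)) (by positivity),
          mul_zero, zero_add, inv_inv]
        ring

lemma integral_integral_gaussian_mul_exp_neg_abs_sub {σ T : ℝ} (hσ : 0 < σ) (hT : 0 ≤ T)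
    (p : ℝ → ℝ) (hp : ∀ E, p E = 1 / (√(2 * π) * σ) * exp (-E ^ 2 / (2 * σ ^ 2))) :
    ∫ E, ∫ E', p E * p E' * exp (-2 * |E - E'| * T) =
      exp (4 * σ ^ 2 * T ^ 2) * (2 / √π * ∫ v in Ioi (2 * σ * T), exp (-v ^ 2)) := by
  have hC : (1 / (√(2 * π) * σ)) ^ 2 * σ ^ 2 * π = 1 / 2 := by
    field_simp
    rw [sq_sqrt (by positivity)]
  set C := 1 / (√(2 * π) * σ)
  have hp_int : Integrable p :=
    ((integrable_exp_neg_mul_sq (b := (2 * σ ^ 2)⁻¹) (by positivity)).const_mul C).congr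
      (Filter.Eventually.of_forall fun E => by rw [hp]; ring_nf)
  have hK : ∀ u, |exp (-2 * |u| * T)| ≤ 1 := fun u => by
    rw [abs_of_pos (exp_pos _), exp_le_one_iff]
    nlinarith [abs_nonneg u]
  have hpp : ∀ u, ∫ E, p E * p (u + E) = C ^ 2 * (σ * √π * exp (-u ^ 2 / (4 * σ ^ 2))) := by
    intro u
    simp_rw [hp, ← integral_exp_neg_sq_mul_exp_neg_add_sq hσ u, ← integral_const_mul]
    congr 1 with E
    ring
  calc ∫ E, ∫ E', p E * p E' * exp (-2 * |E - E'| * T)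
      = ∫ u, exp (-2 * |u| * T) * ∫ E, p E * p (u + E) := by
        rw [← integral_integral_mul_mul_comp_sub hp_int hp_int (by fun_prop) hK]
        simp only [abs_sub_comm]
    _ = C ^ 2 * σ * √π * ∫ u, exp (-2 * |u| * T) * exp (-u ^ 2 / (4 * σ ^ 2)) := by
        simp_rw [hpp, ← integral_const_mul]
        congr 1 with u
        ring
    _ = exp (4 * σ ^ 2 * T ^ 2) * (2 / √π * ∫ v in Ioi (2 * σ * T), exp (-v ^ 2)) := by
        rw [integral_exp_neg_abs_mul_exp_neg_sq hσ]
        field_simp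
        rw [sq_sqrt pi_pos.le]
        linear_combination (4 * ∫ v in Ioi (σ * T * 2), exp (-v ^ 2)) * hC

lemma integral_exp_neg_mul_sq_div_add_sq {a b : ℝ} (ha : 0 < a) (hb : 0 < b) :
    ∫ t, exp (-a * t ^ 2) / (b + t ^ 2) = ∫ s in Ioi 0, exp (-b * s) * √(π / (a + s)) := by
  set F : ℝ → ℝ → ℝ := fun t s => exp (-a * t ^ 2) * exp (-(b + t ^ 2) * s) with hF
  have hlaplace : ∀ t, exp (-a * t ^ 2) / (b + t ^ 2) = ∫ s in Ioi 0, F t s := fun t => by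
    have : -(b + t ^ 2) < 0 := by nlinarith
    rw [hF, integral_const_mul, integral_exp_mul_Ioi this, mul_zero, exp_zero, neg_div_neg_eq,
      div_eq_mul_one_div]
  have hF_int : Integrable (Function.uncurry F) (volume.prod (volume.restrict (Ioi 0))) := by
    have hdom : Integrable (fun z : ℝ × ℝ => exp (-a * z.1 ^ 2) * exp (-(b * z.2)))
        (volume.prod (volume.restrict (Ioi 0))) :=
      (integrable_exp_neg_mul_sq ha).mul_prod
        (by simpa [IntegrableOn] using exp_neg_integrableOn_Ioi 0 hb)
    have hpos : ∀ᵐ z : ℝ × ℝ ∂(volume.prod (volume.restrict (Ioi 0))), 0 < z.2 :=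
      Measure.quasiMeasurePreserving_snd.ae (ae_restrict_mem measurableSet_Ioi)
    refine hdom.mono' (by fun_prop) ?_
    filter_upwards [hpos] with z hz
    simp only [Function.uncurry, hF]
    rw [Real.norm_eq_abs, abs_of_pos (by positivity)]
    gcongr
    nlinarith [mul_nonneg (sq_nonneg z.1) hz.le]
  have hgauss : ∀ s, ∫ t, F t s = exp (-b * s) * √(π / (a + s)) := fun s => by
    rw [← integral_gaussian, ← integral_const_mul]
    congr 1 with t
    simp only [hF, ← exp_add]
    ring_nf
  rw [integral_congr_ae (Filter.Eventually.of_forall hlaplace), integral_integral_swap hF_int]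
  simp_rw [hgauss]

lemma integral_Ioi_exp_neg_mul_mul_sqrt_div {A b : ℝ} (hA : 0 ≤ A) :
    ∫ s in Ioi 0, exp (-b * s) * √(π / (A ^ 2 + s)) =
      2 * √π * exp (b * A ^ 2) * ∫ w in Ioi A, exp (-b * w ^ 2) := by
  rw [integral_Ioi_zero_eq_integral_Ioi_sq_sub _ hA, ← integral_const_mul]
  refine setIntegral_congr_fun measurableSet_Ioi fun w (hw : A < w) => ?_
  have hw0 : 0 < w := hA.trans_lt hw
  rw [add_sub_cancel, sqrt_div pi_pos.le, sqrt_sq hw0.le, mul_assoc _ (exp _), ← exp_add]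
  field_simp
  ring_nf

lemma mul_integral_exp_neg_sq_div_sq_add_sq {σ T : ℝ} (hσ : 0 < σ) (hT : 0 < T) :
    T / π * ∫ t, exp (-4 * σ ^ 2 * t ^ 2) / (T ^ 2 + t ^ 2) =
      exp (4 * σ ^ 2 * T ^ 2) * (2 / √π * ∫ v in Ioi (2 * σ * T), exp (-v ^ 2)) := by
  have hscale : ∫ w in Ioi (2 * σ), exp (-T ^ 2 * w ^ 2) =
      T⁻¹ * ∫ v in Ioi (2 * σ * T), exp (-v ^ 2) := by
    rw [mul_comm _ T, ← smul_eq_mul (a := T⁻¹),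
      ← integral_comp_mul_left_Ioi (fun v => exp (-v ^ 2)) _ hT]
    simp_rw [mul_pow, neg_mul]
  rw [neg_mul, integral_exp_neg_mul_sq_div_add_sq (by positivity) (by positivity),
    show 4 * σ ^ 2 = (2 * σ) ^ 2 by ring, integral_Ioi_exp_neg_mul_mul_sqrt_div (by positivity),
    hscale]
  have hπ : √π ^ 2 = π := sq_sqrt pi_pos.le
  field_simp
  rw [hπ]

/-- For a Gaussian energy distribution of standard deviation σ (continuous limit),
Tr(ω_{L_T}²) = ∬ p(E)p(E′)e^{−2|E−E′|T} dE dE′ = (T/π)∫ e^{−4σ²t²}/(T²+t²) dt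
             = e^{4σ²T²}(1 − erf(2σT)). -/
theorem stmt_9 (σ T : ℝ) (hσ : 0 < σ) (hT : 0 < T) (p : ℝ → ℝ)
    (hp : ∀ E, p E = (1 / (Real.sqrt (2 * Real.pi) * σ)) * Real.exp (-E ^ 2 / (2 * σ ^ 2)))
    (erf : ℝ → ℝ)
    (herf : ∀ x, erf x = (2 / Real.sqrt Real.pi) * ∫ t in (0 : ℝ)..x, Real.exp (-t ^ 2)) :
    (∫ E : ℝ, ∫ E' : ℝ, p E * p E' * Real.exp (-2 * |E - E'| * T)) =
      (T / Real.pi) * ∫ t : ℝ, Real.exp (-4 * σ ^ 2 * t ^ 2) / (T ^ 2 + t ^ 2) ∧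
    (T / Real.pi) * (∫ t : ℝ, Real.exp (-4 * σ ^ 2 * t ^ 2) / (T ^ 2 + t ^ 2)) =
      Real.exp (4 * σ ^ 2 * T ^ 2) * (1 - erf (2 * σ * T)) := by
  have hlorentz := mul_integral_exp_neg_sq_div_sq_add_sq hσ hT
  refine ⟨(integral_integral_gaussian_mul_exp_neg_abs_sub hσ hT.le p hp).trans hlorentz.symm, ?_⟩
  rw [hlorentz, herf, two_div_sqrt_pi_mul_integral_Ioi_exp_neg_sq]
end
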